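/- With the notation ρ̄ⁿ(k) = β⁽ⁿ⁾ fⁿ(k): for any two letters k, k' ∈ ℕ₀, the words ρ̄ⁿ(k) and ρ̄ⁿ(k') differ only in their last letter, i.e., they agree on the first rⁿ − 1 positions. -/
import Mathlib


/-- Extension of a substitution on ℕ₀ to words by concatenation. -/
def applyN (σ : ℕ → List ℕ) (w : List ℕ) : List ℕ := w.flatMap σ

lemma applyN_append (σ : ℕ → List ℕ) (w w' : List ℕ) :
    applyN σ (w ++ w') = applyN σ w ++ applyN σ w' := by
  simp [applyN]

lemma applyN_iter_append (σ : ℕ → List ℕ) (n : ℕ) (w w' : List ℕ) :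
    (applyN σ)^[n] (w ++ w') = (applyN σ)^[n] w ++ (applyN σ)^[n] w' := by
  induction n generalizing w w' with
  | zero => simp
  | succ n ih => simp [Function.iterate_succ_apply, applyN_append, ih]

/-- For any two letters k, k', the words ρ̄ⁿ(k) and ρ̄ⁿ(k') (both of length rⁿ)
agree on the first rⁿ − 1 positions, i.e. they differ only in their last letter. -/
theorem stmt6 (p r : ℕ) (hr : 2 ≤ r) (ks : List ℕ) (hks : ks.length = r - 1)
    (kr : ℕ) (f : ℕ → ℕ) (hf : ∀ k, f k = kr + p * k)
    (ρbar : ℕ → List ℕ) (hρbar : ∀ k, ρbar k = ks ++ [f k]) :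
    ∀ (n k k' : ℕ),
      ((applyN ρbar)^[n] [k]).length = r ^ n ∧
      ((applyN ρbar)^[n] [k]).take (r ^ n - 1)
        = ((applyN ρbar)^[n] [k']).take (r ^ n - 1) := by
  have hlen1 : ∀ k, (ρbar k).length = r := by
    intro k; rw [hρbar]; simp [hks]; omega
  have hlen : ∀ w, (applyN ρbar w).length = r * w.length := by
    intro w
    induction w with
    | nil => simp [applyN]
    | cons a t ih =>
        have : applyN ρbar (a :: t) = ρbar a ++ applyN ρbar t := by
          simp [applyN]
        rw [this]
        simp [hlen1, ih]; ring
  have hlenIter : ∀ n w, ((applyN ρbar)^[n] w).length = r ^ n * w.length := by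
    intro n
    induction n with
    | zero => simp
    | succ n ih =>
        intro w
        rw [Function.iterate_succ_apply, ih, hlen, pow_succ]
        ring
  intro n
  induction n with
  | zero => intro k k'; simp
  | succ n ih =>
      intro k k'
      have key : ∀ k : ℕ, (applyN ρbar)^[n+1] [k]
          = (applyN ρbar)^[n] ks ++ (applyN ρbar)^[n] [f k] := by
        intro k
        rw [Function.iterate_succ_apply]
        have : applyN ρbar [k] = ks ++ [f k] := by simp [applyN, hρbar]
        rw [this, applyN_iter_append]
      have hks' : ((applyN ρbar)^[n] ks).length = r ^ n * (r - 1) := by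
        rw [hlenIter, hks]
      have ha : 1 ≤ r ^ n := Nat.one_le_pow _ _ (by omega)
      have hb : r ^ n ≤ r ^ n * r := Nat.le_mul_of_pos_right _ (by omega)
      have hmul : r ^ n * (r - 1) = r ^ n * r - r ^ n := by
        rw [Nat.mul_sub]; ring_nf
      constructor
      · rw [hlenIter]; simp
      · rw [key k, key k']
        rw [List.take_append, List.take_append]
        have h1 : ((applyN ρbar)^[n] ks).length ≤ r ^ (n+1) - 1 := by
          rw [hks', hmul, pow_succ]; omega
        rw [List.take_of_length_le h1]
        congr 1
        have h2 : r ^ (n+1) - 1 - ((applyN ρbar)^[n] ks).length = r ^ n - 1 := by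
          rw [hks', hmul, pow_succ]; omega
        rw [h2]
        exact (ih (f k) (f k')).2
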